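/- Let E = E(I₀,{n_k},{c_k},{ξ_{k,l}}) be a homogeneous perfect set satisfying the gap-comparability condition with constant χ ≥ 1. Then there exists a sequence {H_m}_{m≥0} of closed sets, decreasing under inclusion, with E = ∩_{k≥0} E_k = ∩_{k≥0} E_k* = ∩_{m≥0} H_m, such that: (1) each H_m is a finite union of closed intervals with pairwise disjoint interiors (called its branches); (2) H_{m_k} = E_k* for every k ≥ 0, where m₀ = 0 and m_k = i₁+⋯+i_k; (3) with the integer M = ⌊2χ⌋+1 > 2χ, each branch of H_{m−1} contains at most M² branches of H_m for every m ≥ 1; (4) for every m ≥ 0, max_{I branch of H_m} |I| ≤ 2χ·min_{I branch of H_m} |I|. -/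

import Mathlib

open Set Filter Metric

noncomputable section

/-- A word `σ = σ₁⋯σ_k` is valid for the branching sequence `n` if `1 ≤ σ_j ≤ n j`
for every `1 ≤ j ≤ k`.  Words are represented as lists (read with 1-based indices). -/
def ValidWord (n : ℕ → ℕ) (σ : List ℕ) : Prop :=
  ∀ j, j < σ.length → 1 ≤ σ.getD j 0 ∧ σ.getD j 0 ≤ n (j + 1)

/-- The conditions (1)–(4) of Definition 2.1: the family of closed intervals
`I_σ = [a σ, b σ]` (for `σ ∈ D`) has homogeneous perfect structure with parameters
`n`, `c`, `ξ`. -/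
structure HPStruct (n : ℕ → ℕ) (c : ℕ → ℝ) (ξ : ℕ → ℕ → ℝ) (a b : List ℕ → ℝ) : Prop where
  /-- each `I_{σ*j}` is a subinterval of `I_σ` -/
  sub : ∀ σ : List ℕ, ValidWord n σ → ∀ j, 1 ≤ j → j ≤ n (σ.length + 1) →
    Set.Icc (a (σ ++ [j])) (b (σ ++ [j])) ⊆ Set.Icc (a σ) (b σ)
  /-- `min I_{σ*(l+1)} ≥ max I_{σ*l}` -/
  ord : ∀ σ : List ℕ, ValidWord n σ → ∀ l, 1 ≤ l → l + 1 ≤ n (σ.length + 1) →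
    b (σ ++ [l]) ≤ a (σ ++ [l + 1])
  /-- `|I_{σ*j}| / |I_σ| = c_k` -/
  ratio : ∀ σ : List ℕ, ValidWord n σ → ∀ j, 1 ≤ j → j ≤ n (σ.length + 1) →
    b (σ ++ [j]) - a (σ ++ [j]) = c (σ.length + 1) * (b σ - a σ)
  /-- `min I_{σ*1} - min I_σ = ξ_{k,0}` -/
  gap0 : ∀ σ : List ℕ, ValidWord n σ → a (σ ++ [1]) - a σ = ξ (σ.length + 1) 0
  /-- `min I_{σ*(l+1)} - max I_{σ*l} = ξ_{k,l}` -/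
  gapl : ∀ σ : List ℕ, ValidWord n σ → ∀ l, 1 ≤ l → l + 1 ≤ n (σ.length + 1) →
    a (σ ++ [l + 1]) - b (σ ++ [l]) = ξ (σ.length + 1) l
  /-- `max I_σ - max I_{σ*n_k} = ξ_{k,n_k}` -/
  gapn : ∀ σ : List ℕ, ValidWord n σ → b σ - b (σ ++ [n (σ.length + 1)]) =
    ξ (σ.length + 1) (n (σ.length + 1))

/-- A homogeneous perfect set datum `E(I₀, {n_k}, {c_k}, {ξ_{k,l}})` of Definition 2.1:
a nondegenerate initial closed interval `I₀ = [a ∅, b ∅]`, integers `n_k ≥ 2`,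
ratios `c_k > 0` with `n_k c_k < 1`, nonnegative gaps `ξ_{k,l}` (`0 ≤ l ≤ n_k`), and a
family of closed intervals `I_σ = [a σ, b σ]` with homogeneous perfect structure. -/
structure HPS where
  n : ℕ → ℕ
  c : ℕ → ℝ
  ξ : ℕ → ℕ → ℝ
  a : List ℕ → ℝ
  b : List ℕ → ℝ
  hn : ∀ k, 1 ≤ k → 2 ≤ n k
  hc : ∀ k, 1 ≤ k → 0 < c k
  hnc : ∀ k, 1 ≤ k → (n k : ℝ) * c k < 1
  hξ : ∀ k, 1 ≤ k → ∀ l, l ≤ n k → 0 ≤ ξ k l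
  hab : a [] < b []
  struct : HPStruct n c ξ a b

namespace HPS

variable (S : HPS)

/-- `E_k`, the union of the `k`-order basic intervals. -/
def Ek (k : ℕ) : Set ℝ :=
  ⋃ σ ∈ {σ : List ℕ | σ.length = k ∧ ValidWord S.n σ}, Set.Icc (S.a σ) (S.b σ)

/-- The homogeneous perfect set `E = ⋂_k E_k`. -/
def E : Set ℝ := ⋂ k, S.Ek k

/-- Left endpoint of the trimmed interval `I_σ*` (for `σ ∈ D_k`):
`min I_σ* - min I_σ = ξ_{k+1,0}`. -/
def aStar (σ : List ℕ) : ℝ := S.a σ + S.ξ (σ.length + 1) 0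

/-- Right endpoint of the trimmed interval `I_σ*`:
`max I_σ - max I_σ* = ξ_{k+1,n_{k+1}}`. -/
def bStar (σ : List ℕ) : ℝ := S.b σ - S.ξ (σ.length + 1) (S.n (σ.length + 1))

/-- `E_k* = ⋃_{σ ∈ D_k} I_σ*`. -/
def EkStar (k : ℕ) : Set ℝ :=
  ⋃ σ ∈ {σ : List ℕ | σ.length = k ∧ ValidWord S.n σ}, Set.Icc (S.aStar σ) (S.bStar σ)

/-- `δ_k = |I_σ*|` for `σ ∈ D_k` (this common value is computed on the word `1⋯1`). -/
def delta (k : ℕ) : ℝ :=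
  S.bStar (List.replicate k 1) - S.aStar (List.replicate k 1)

/-- `c_k* = δ_k / δ_{k-1}`. -/
def cStar (k : ℕ) : ℝ := S.delta k / S.delta (k - 1)

/-- `δ_k* = δ₀ c₁* ⋯ c_k*`. -/
def deltaStar (k : ℕ) : ℝ := S.delta 0 * ∏ j ∈ Finset.Icc 1 k, S.cStar j

/-- `N_k* = n₁* ⋯ n_k* = n₁ ⋯ n_k`. -/
def Nstar (k : ℕ) : ℕ := ∏ j ∈ Finset.Icc 1 k, S.n j

/-- The reconstructed gap parameters: `ξ*_{k,l} = ξ_{k,l} + ξ_{k+1,0} + ξ_{k+1,n_{k+1}}`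
for `1 ≤ l ≤ n_k - 1`, `ξ*_{k,0} = ξ_{k+1,0}`, `ξ*_{k,n_k} = ξ_{k+1,n_{k+1}}`. -/
def xiStar (k l : ℕ) : ℝ :=
  if l = 0 then S.ξ (k + 1) 0
  else if l = S.n k then S.ξ (k + 1) (S.n (k + 1))
  else S.ξ k l + S.ξ (k + 1) 0 + S.ξ (k + 1) (S.n (k + 1))

/-- `α̲*_k = min_{1 ≤ l ≤ n_k - 1} ξ*_{k,l}`. -/
def alphaLo (k : ℕ) : ℝ := sInf ((fun l => S.xiStar k l) '' Set.Icc 1 (S.n k - 1))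

/-- `α̅*_k = max_{1 ≤ l ≤ n_k - 1} ξ*_{k,l}`. -/
def alphaHi (k : ℕ) : ℝ := sSup ((fun l => S.xiStar k l) '' Set.Icc 1 (S.n k - 1))

end HPS

/-- The gap-comparability condition: `max_{1≤l≤n_k-1} ξ_{k,l} ≤ χ · min_{1≤l≤n_k-1} ξ_{k,l}`
for every `k ≥ 1`. -/
def GapComparable (S : HPS) (χ : ℝ) : Prop :=
  ∀ k, 1 ≤ k → ∀ l l', 1 ≤ l → l ≤ S.n k - 1 → 1 ≤ l' → l' ≤ S.n k - 1 →
    S.ξ k l ≤ χ * S.ξ k l'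

/-- `M = ⌊2χ⌋ + 1`. -/
def Mconst (χ : ℝ) : ℕ := ⌊2 * χ⌋₊ + 1

/-- `i_k`: equal to `1` if `n_k < M`, and otherwise the integer with `M^{i_k} ≤ n_k < M^{i_k+1}`. -/
def HPS.ik (S : HPS) (χ : ℝ) (k : ℕ) : ℕ := max 1 (Nat.log (Mconst χ) (S.n k))

/-- `m_k = i₁ + ⋯ + i_k` (with `m₀ = 0`). -/
def HPS.mIdx (S : HPS) (χ : ℝ) (k : ℕ) : ℕ := ∑ l ∈ Finset.Icc 1 k, S.ik χ l

/-- For `m ≥ 1`, the index `k` with `m_{k-1} < m ≤ m_k`. -/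
def HPS.kOf (S : HPS) (χ : ℝ) (m : ℕ) : ℕ := sInf {k | m ≤ S.mIdx χ k}


lemma valid_nil (n : ℕ → ℕ) : ValidWord n [] := by intro j hj; simp at hj

lemma valid_append {n : ℕ → ℕ} {σ : List ℕ} (h : ValidWord n σ) {j : ℕ}
    (h1 : 1 ≤ j) (h2 : j ≤ n (σ.length + 1)) : ValidWord n (σ ++ [j]) := by
  intro i hi
  simp only [List.length_append, List.length_singleton] at hi
  rcases lt_or_eq_of_le (Nat.lt_succ_iff.mp hi) with hlt | heq
  · rw [List.getD_append _ _ _ _ hlt]; exact h i hlt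
  · subst heq
    rw [List.getD_eq_getElem?_getD, List.getElem?_append_right le_rfl]
    simpa using ⟨h1, h2⟩

lemma valid_of_append {n : ℕ → ℕ} {σ : List ℕ} {j : ℕ} (h : ValidWord n (σ ++ [j])) :
    ValidWord n σ ∧ 1 ≤ j ∧ j ≤ n (σ.length + 1) := by
  constructor
  · intro i hi
    have := h i (by simp; omega)
    rwa [List.getD_append _ _ _ _ hi] at this
  · have := h σ.length (by simp)
    rwa [List.getD_eq_getElem?_getD, List.getElem?_append_right le_rfl,
      Nat.sub_self] at this

lemma valid_replicate {n : ℕ → ℕ} (hn : ∀ k, 1 ≤ k → 2 ≤ n k) (k : ℕ) :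
    ValidWord n (List.replicate k 1) := by
  intro j hj
  simp only [List.length_replicate] at hj
  rw [List.getD_eq_getElem?_getD, List.getElem?_replicate_of_lt hj]
  exact ⟨le_rfl, le_trans (by norm_num) (hn (j+1) (by omega))⟩

def WordsF (n : ℕ → ℕ) : ℕ → Finset (List ℕ)
  | 0 => {[]}
  | (k+1) => ((WordsF n k) ×ˢ Finset.Icc 1 (n (k+1))).image (fun p => p.1 ++ [p.2])

lemma mem_wordsF {n : ℕ → ℕ} : ∀ {k : ℕ} {σ : List ℕ},
    σ ∈ WordsF n k ↔ σ.length = k ∧ ValidWord n σ := by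
  intro k
  induction k with
  | zero =>
    intro σ
    simp only [WordsF, Finset.mem_singleton, List.length_eq_zero_iff]
    constructor
    · rintro rfl; exact ⟨rfl, valid_nil n⟩
    · rintro ⟨rfl, _⟩; rfl
  | succ k ih =>
    intro σ
    simp only [WordsF, Finset.mem_image, Finset.mem_product, Finset.mem_Icc, Prod.exists]
    constructor
    · rintro ⟨τ, j, ⟨hτ, h1, h2⟩, rfl⟩
      obtain ⟨hl, hv⟩ := ih.mp hτ
      subst hl
      exact ⟨by simp, valid_append hv h1 h2⟩
    · rintro ⟨hl, hv⟩
      have hne : σ ≠ [] := by intro h; subst h; simp at hl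
      obtain ⟨τ, j, rfl⟩ : ∃ τ j, σ = τ ++ [j] := by
        refine ⟨σ.dropLast, σ.getLast hne, ?_⟩
        exact (List.dropLast_append_getLast hne).symm
      obtain ⟨hv', h1, h2⟩ := valid_of_append hv
      have hlτ : τ.length = k := by simp at hl; omega
      exact ⟨τ, j, ⟨ih.mpr ⟨hlτ, hv'⟩, h1, by rwa [hlτ] at h2⟩, rfl⟩

lemma wordsF_nonempty {n : ℕ → ℕ} (hn : ∀ k, 1 ≤ k → 2 ≤ n k) (k : ℕ) :
    (WordsF n k).Nonempty :=
  ⟨List.replicate k 1, mem_wordsF.mpr ⟨List.length_replicate .., valid_replicate hn k⟩⟩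

namespace HPS
variable (S : HPS)

/-- common length of level-`k` basic intervals -/
def len (k : ℕ) : ℝ := (S.b [] - S.a []) * ∏ j ∈ Finset.Icc 1 k, S.c j

lemma len_zero : S.len 0 = S.b [] - S.a [] := by simp [len]

lemma len_succ (k : ℕ) : S.len (k + 1) = S.c (k + 1) * S.len k := by
  rw [len, len, Finset.prod_Icc_succ_top (by omega : 1 ≤ k + 1)]; ring

lemma len_pos (k : ℕ) : 0 < S.len k := by
  apply mul_pos (by linarith [S.hab])
  exact Finset.prod_pos (fun j hj => S.hc j (Finset.mem_Icc.mp hj).1)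

lemma blen : ∀ {σ : List ℕ}, ValidWord S.n σ → S.b σ - S.a σ = S.len σ.length := by
  intro σ
  induction σ using List.reverseRecOn with
  | nil => intro _; simp [len_zero]
  | append_singleton τ j ih =>
    intro h
    obtain ⟨hτ, h1, h2⟩ := valid_of_append h
    rw [S.struct.ratio τ hτ j h1 h2, ih hτ]
    simp [len_succ]

lemma ab_lt {σ : List ℕ} (h : ValidWord S.n σ) : S.a σ < S.b σ := by
  have := S.blen h; have := S.len_pos σ.length; linarith

lemma child_sub {σ : List ℕ} (h : ValidWord S.n σ) {j : ℕ} (h1 : 1 ≤ j)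
    (h2 : j ≤ S.n (σ.length + 1)) :
    S.a σ ≤ S.a (σ ++ [j]) ∧ S.b (σ ++ [j]) ≤ S.b σ := by
  have hab : S.a (σ ++ [j]) ≤ S.b (σ ++ [j]) := le_of_lt (S.ab_lt (valid_append h h1 h2))
  have := S.struct.sub σ h j h1 h2
  rw [Set.Icc_subset_Icc_iff hab] at this
  exact this

lemma chain_ba {σ : List ℕ} (h : ValidWord S.n σ) {p q : ℕ} (h1 : 1 ≤ p) (hpq : p < q)
    (h2 : q ≤ S.n (σ.length + 1)) : S.b (σ ++ [p]) ≤ S.a (σ ++ [q]) := by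
  induction q with
  | zero => omega
  | succ q ih =>
    have hq1 : 1 ≤ q := by omega
    have hord := S.struct.ord σ h q hq1 h2
    rcases Nat.lt_or_ge p q with hlt | hge
    · have hqn : q ≤ S.n (σ.length + 1) := by omega
      have : S.a (σ ++ [q]) ≤ S.b (σ ++ [q]) := le_of_lt (S.ab_lt (valid_append h hq1 hqn))
      exact le_trans (ih hlt hqn) (le_trans this hord)
    · have : p = q := by omega
      subst this; exact hord

lemma chain_aa {σ : List ℕ} (h : ValidWord S.n σ) {p q : ℕ} (h1 : 1 ≤ p) (hpq : p ≤ q)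
    (h2 : q ≤ S.n (σ.length + 1)) : S.a (σ ++ [p]) ≤ S.a (σ ++ [q]) := by
  rcases eq_or_lt_of_le hpq with rfl | hlt
  · rfl
  · exact le_trans (le_of_lt (S.ab_lt (valid_append h h1 (by omega)))) (S.chain_ba h h1 hlt h2)

lemma chain_bb {σ : List ℕ} (h : ValidWord S.n σ) {p q : ℕ} (h1 : 1 ≤ p) (hpq : p ≤ q)
    (h2 : q ≤ S.n (σ.length + 1)) : S.b (σ ++ [p]) ≤ S.b (σ ++ [q]) := by
  rcases eq_or_lt_of_le hpq with rfl | hlt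
  · rfl
  · exact le_trans (S.chain_ba h h1 hlt h2)
      (le_of_lt (S.ab_lt (valid_append h (by omega) h2)))

lemma order_words : ∀ {k : ℕ} {σ τ : List ℕ}, σ ∈ WordsF S.n k → τ ∈ WordsF S.n k →
    σ ≠ τ → S.b σ ≤ S.a τ ∨ S.b τ ≤ S.a σ := by
  intro k
  induction k with
  | zero =>
    intro σ τ hσ hτ hne
    rw [mem_wordsF] at hσ hτ
    exact absurd (by rw [List.length_eq_zero_iff.mp hσ.1, List.length_eq_zero_iff.mp hτ.1]) hne
  | succ k ih =>
    intro σ τ hσ hτ hne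
    obtain ⟨hlσ, hvσ⟩ := mem_wordsF.mp hσ
    obtain ⟨hlτ, hvτ⟩ := mem_wordsF.mp hτ
    obtain ⟨σ', i, rfl⟩ : ∃ σ' i, σ = σ' ++ [i] := by
      refine ⟨σ.dropLast, σ.getLast ?_, (List.dropLast_append_getLast _).symm⟩
      intro hh; rw [hh] at hlσ; simp at hlσ
    obtain ⟨τ', j, rfl⟩ : ∃ τ' j, τ = τ' ++ [j] := by
      refine ⟨τ.dropLast, τ.getLast ?_, (List.dropLast_append_getLast _).symm⟩
      intro hh; rw [hh] at hlτ; simp at hlτ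
    obtain ⟨hvσ', hi1, hi2⟩ := valid_of_append hvσ
    obtain ⟨hvτ', hj1, hj2⟩ := valid_of_append hvτ
    have hlσ' : σ'.length = k := by simp at hlσ; omega
    have hlτ' : τ'.length = k := by simp at hlτ; omega
    by_cases hst : σ' = τ'
    · subst hst
      have hij : i ≠ j := fun hh => hne (by rw [hh])
      rcases Nat.lt_or_ge i j with hlt | hge
      · exact Or.inl (S.chain_ba hvσ' hi1 hlt hj2)
      · exact Or.inr (S.chain_ba hvσ' hj1 (by omega) hi2)
    · rcases ih (mem_wordsF.mpr ⟨hlσ', hvσ'⟩) (mem_wordsF.mpr ⟨hlτ', hvτ'⟩) hst with hh | hh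
      · exact Or.inl (le_trans (S.child_sub hvσ' hi1 hi2).2
          (le_trans hh (S.child_sub hvτ' hj1 hj2).1))
      · exact Or.inr (le_trans (S.child_sub hvτ' hj1 hj2).2
          (le_trans hh (S.child_sub hvσ' hi1 hi2).1))

end HPS

namespace HPS
variable (S : HPS)

lemma aStar_eq {σ : List ℕ} (h : ValidWord S.n σ) : S.aStar σ = S.a (σ ++ [1]) := by
  have := S.struct.gap0 σ h; rw [aStar]; linarith

lemma bStar_eq {σ : List ℕ} (h : ValidWord S.n σ) :
    S.bStar σ = S.b (σ ++ [S.n (σ.length + 1)]) := by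
  have := S.struct.gapn σ h; rw [bStar]; linarith

lemma n_two {σ : List ℕ} : 2 ≤ S.n (σ.length + 1) := S.hn _ (by omega)

/-- hull length formula -/
lemma sum_len {σ : List ℕ} (h : ValidWord S.n σ) {p q : ℕ} (h1 : 1 ≤ p) (hpq : p ≤ q)
    (h2 : q ≤ S.n (σ.length + 1)) :
    S.b (σ ++ [q]) - S.a (σ ++ [p]) =
      (q - p + 1 : ℕ) * (S.c (σ.length + 1) * S.len σ.length) +
      ∑ l ∈ Finset.Ico p q, S.ξ (σ.length + 1) l := by
  induction q with
  | zero => omega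
  | succ q ih =>
    rcases Nat.lt_or_ge p (q + 1) with hlt | hge
    · have hpq' : p ≤ q := by omega
      have hq1 : 1 ≤ q := by omega
      have hqn : q ≤ S.n (σ.length + 1) := by omega
      have e1 : S.b (σ ++ [q+1]) - S.a (σ ++ [q+1]) = S.c (σ.length+1) * S.len σ.length := by
        rw [S.struct.ratio σ h (q+1) (by omega) h2, S.blen h]
      have e2 := S.struct.gapl σ h q hq1 h2
      have e3 := ih hpq' hqn
      have hcard : q + 1 - p + 1 = (q - p + 1) + 1 := by omega
      rw [Finset.sum_Ico_succ_top hpq', hcard]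
      push_cast at e3 ⊢
      linear_combination e1 + e2 + e3
    · have : p = q + 1 := by omega
      subst this
      simp only [Nat.sub_self, Nat.cast_zero, Finset.Ico_self, Finset.sum_empty, add_zero]
      rw [S.struct.ratio σ h (q+1) h1 h2, S.blen h]
      push_cast; ring

lemma ekstar_subset_ek (k : ℕ) : S.EkStar k ⊆ S.Ek k := by
  intro x hx
  simp only [EkStar, Ek, Set.mem_iUnion, Set.mem_setOf_eq] at hx ⊢
  obtain ⟨σ, ⟨hl, hv⟩, hx⟩ := hx
  refine ⟨σ, ⟨hl, hv⟩, ?_⟩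
  have h0 := S.hξ (σ.length + 1) (by omega) 0 (by omega)
  have hn' := S.hξ (σ.length + 1) (by omega) (S.n (σ.length+1)) le_rfl
  exact Set.Icc_subset_Icc (by rw [aStar]; linarith) (by rw [bStar]; linarith) hx

lemma ek_succ_subset_ekstar (k : ℕ) : S.Ek (k + 1) ⊆ S.EkStar k := by
  intro x hx
  simp only [EkStar, Ek, Set.mem_iUnion, Set.mem_setOf_eq] at hx ⊢
  obtain ⟨σ, ⟨hl, hv⟩, hx⟩ := hx
  obtain ⟨τ, j, rfl⟩ : ∃ τ j, σ = τ ++ [j] := by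
    refine ⟨σ.dropLast, σ.getLast ?_, (List.dropLast_append_getLast _).symm⟩
    intro hh; rw [hh] at hl; simp at hl
  obtain ⟨hvτ, hj1, hj2⟩ := valid_of_append hv
  have hlτ : τ.length = k := by simp at hl; omega
  refine ⟨τ, ⟨hlτ, hvτ⟩, ?_⟩
  refine Set.Icc_subset_Icc ?_ ?_ hx
  · rw [S.aStar_eq hvτ]; exact S.chain_aa hvτ le_rfl hj1 hj2
  · rw [S.bStar_eq hvτ]; exact S.chain_bb hvτ hj1 hj2 le_rfl

lemma iInter_ekstar : S.E = ⋂ k, S.EkStar k := by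
  apply Set.Subset.antisymm
  · intro x hx
    simp only [E, Set.mem_iInter] at hx ⊢
    exact fun k => S.ek_succ_subset_ekstar k (hx (k + 1))
  · intro x hx
    simp only [E, Set.mem_iInter] at hx ⊢
    intro k
    cases k with
    | zero =>
      exact S.ekstar_subset_ek 0 (hx 0)
    | succ k => exact S.ekstar_subset_ek (k+1) (hx (k+1))

end HPS

lemma Mconst_ge3 {χ : ℝ} (hχ : 1 ≤ χ) : 3 ≤ Mconst χ := by
  have h2 : (2:ℕ) ≤ ⌊2*χ⌋₊ := Nat.le_floor (by push_cast; linarith)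
  simp only [Mconst]; omega

lemma two_chi_lt_M {χ : ℝ} : 2*χ < (Mconst χ : ℝ) := by
  have := Nat.lt_floor_add_one (2*χ)
  simp only [Mconst]; push_cast; linarith

namespace HPS
variable (S : HPS) (χ : ℝ)

lemma mIdx_zero : S.mIdx χ 0 = 0 := by simp [mIdx]

lemma ik_pos (k : ℕ) : 1 ≤ S.ik χ k := le_max_left _ _

lemma mIdx_succ (k : ℕ) : S.mIdx χ (k+1) = S.mIdx χ k + S.ik χ (k+1) := by
  rw [mIdx, mIdx, Finset.sum_Icc_succ_top (by omega : 1 ≤ k + 1)]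

lemma mIdx_strictMono : StrictMono (S.mIdx χ) := by
  apply strictMono_nat_of_lt_succ
  intro k; rw [mIdx_succ]
  have := S.ik_pos χ (k+1); omega

lemma self_le_mIdx (k : ℕ) : k ≤ S.mIdx χ k := by
  induction k with
  | zero => omega
  | succ k ih => rw [mIdx_succ]; have := S.ik_pos χ (k+1); omega

lemma kOf_mIdx (k : ℕ) : S.kOf χ (S.mIdx χ k) = k := by
  rw [kOf]
  have : {j | S.mIdx χ k ≤ S.mIdx χ j} = {j | k ≤ j} := by
    ext j; exact (S.mIdx_strictMono χ).le_iff_le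
  rw [this]
  exact csInf_Ici (α := ℕ)

lemma kOf_le_mIdx (m : ℕ) : m ≤ S.mIdx χ (S.kOf χ m) := by
  have hne : {k | m ≤ S.mIdx χ k}.Nonempty := ⟨m, S.self_le_mIdx χ m⟩
  exact Nat.sInf_mem hne

lemma kOf_min {m j : ℕ} (h : m ≤ S.mIdx χ j) : S.kOf χ m ≤ j := Nat.sInf_le h

lemma kOf_pos {m : ℕ} (hm : 1 ≤ m) : 1 ≤ S.kOf χ m := by
  by_contra hh
  have h0 : S.kOf χ m = 0 := by omega
  have := S.kOf_le_mIdx χ m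
  rw [h0, mIdx_zero] at this; omega

lemma mIdx_pred_lt {m : ℕ} (hm : 1 ≤ m) : S.mIdx χ (S.kOf χ m - 1) < m := by
  by_contra hh
  push_neg at hh
  have h1 := S.kOf_min χ hh
  have h2 := S.kOf_pos χ hm
  omega

lemma nk_lt_M_pow {χ : ℝ} (hχ : 1 ≤ χ) (k : ℕ) : S.n k < (Mconst χ)^(S.ik χ k + 1) := by
  have hM : 1 < Mconst χ := by have := Mconst_ge3 hχ; omega
  have hlog := Nat.lt_pow_succ_log_self hM (S.n k)
  have hle : Nat.log (Mconst χ) (S.n k) ≤ S.ik χ k := le_max_right _ _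
  exact lt_of_lt_of_le hlog (Nat.pow_le_pow_right (by omega) (by omega))

lemma M_pow_le_nk {χ : ℝ} (hχ : 1 ≤ χ) {k : ℕ} (hk : 1 ≤ k) (h2 : 2 ≤ S.ik χ k) :
    (Mconst χ)^(S.ik χ k) ≤ S.n k := by
  have hlog : S.ik χ k = Nat.log (Mconst χ) (S.n k) := by
    rw [ik] at h2 ⊢; omega
  rw [hlog]
  exact Nat.pow_log_le_self _ (by have := S.hn k hk; omega)

end HPS

lemma ndiv_add_le (x y G : ℕ) (hG : 0 < G) : (x + y)/G ≤ x/G + (y + G - 1)/G := by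
  have hA := Nat.add_div hG (a := x) (b := y)
  have hxy : y + G - 1 = y + (G-1) := by omega
  have hB := Nat.add_div hG (a := y) (b := G-1)
  have h1 : (G-1)/G = 0 := Nat.div_eq_of_lt (by omega)
  have h2 : (G-1)%G = G-1 := Nat.mod_eq_of_lt (by omega)
  have h3 : x % G < G := Nat.mod_lt _ hG
  have h4 : y % G < G := Nat.mod_lt _ hG
  rw [hxy, hB, h1, h2]
  rw [hA]
  split_ifs with hc1 hc2 hc2 <;> omega

lemma ndiv_le_add (x y G : ℕ) : x/G + y/G ≤ (x+y)/G := Nat.add_div_le_add_div x y G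

lemma grp_hi_le_n {n G j : ℕ} (hG : 0 < G) (hj : j < G) : (j+1)*n/G ≤ n := by
  calc (j+1)*n/G ≤ G*n/G := Nat.div_le_div_right (Nat.mul_le_mul_right _ (by omega))
    _ = n := Nat.mul_div_cancel_left _ hG

lemma grp_lo_le_hi {n G j : ℕ} (hG : 0 < G) (hGn : G ≤ n) : j*n/G + 1 ≤ (j+1)*n/G := by
  rw [Nat.le_div_iff_mul_le hG]
  have := Nat.div_mul_le_self (j*n) G
  have : (j*n/G)*G ≤ j*n := Nat.div_mul_le_self _ _
  calc (j*n/G + 1)*G = (j*n/G)*G + G := by ring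
    _ ≤ j*n + n := by omega
    _ = (j+1)*n := by ring

lemma grp_size_le {n G j : ℕ} (hG : 0 < G) : (j+1)*n/G ≤ j*n/G + (n + G - 1)/G := by
  have : (j+1)*n = j*n + n := by ring
  rw [this]
  exact ndiv_add_le _ _ _ hG

lemma grp_size_ge {n G j : ℕ} : j*n/G + n/G ≤ (j+1)*n/G := by
  have : (j+1)*n = j*n + n := by ring
  rw [this]
  exact ndiv_le_add _ _ _

lemma grp_nest_lo {n M t j : ℕ} (hM : 0 < M) : (j/M)*n/M^t ≤ j*n/M^(t+1) := by
  have e : (j/M)*n/M^t = ((j/M)*M)*n/M^(t+1) := by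
    rw [pow_succ]
    rw [show (j/M)*M*n = ((j/M)*n)*M by ring]
    rw [Nat.mul_div_mul_right _ _ hM]
  rw [e]
  exact Nat.div_le_div_right (Nat.mul_le_mul_right _ (Nat.div_mul_le_self _ _))

lemma grp_nest_hi {n M t j : ℕ} (hM : 0 < M) : (j+1)*n/M^(t+1) ≤ (j/M+1)*n/M^t := by
  have e : (j/M+1)*n/M^t = ((j/M+1)*M)*n/M^(t+1) := by
    rw [pow_succ]
    rw [show (j/M+1)*M*n = ((j/M+1)*n)*M by ring]
    rw [Nat.mul_div_mul_right _ _ hM]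
  rw [e]
  apply Nat.div_le_div_right
  apply Nat.mul_le_mul_right
  have hd := Nat.div_add_mod j M
  have hm := Nat.mod_lt j hM
  have he : (j/M+1)*M = M*(j/M)+M := by ring
  omega

lemma grp_mem {n G j : ℕ} (hG : 0 < G) (hj1 : 1 ≤ j) (hj2 : j ≤ n) :
    (j*G-1)/n < G ∧ ((j*G-1)/n)*n/G + 1 ≤ j ∧ j ≤ ((j*G-1)/n + 1)*n/G := by
  have hn : 0 < n := by omega
  have hjG : 0 < j*G := Nat.mul_pos hj1 hG
  have e0 : j*G = G*(j-1) + G := by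
    have hj : (j-1)+1 = j := by omega
    calc j*G = G*((j-1)+1) := by rw [hj]; ring
      _ = G*(j-1) + G := by ring
  have e1 : j*G - 1 = G*(j-1) + (G-1) := by omega
  have e2 : (j*G-1)/G = j-1 := by
    rw [e1, Nat.mul_add_div hG, Nat.div_eq_of_lt (by omega : G - 1 < G)]; omega
  refine ⟨?_, ?_, ?_⟩
  · by_contra h
    push_neg at h
    have h2 : n*G ≤ n*((j*G-1)/n) := Nat.mul_le_mul_left _ h
    have hd := Nat.div_add_mod (j*G-1) n
    have hjn : j*G ≤ n*G := Nat.mul_le_mul_right _ hj2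
    omega
  · have h1 : ((j*G-1)/n)*n ≤ j*G-1 := Nat.div_mul_le_self _ _
    have h2 : ((j*G-1)/n)*n/G ≤ (j*G-1)/G := Nat.div_le_div_right h1
    omega
  · rw [Nat.le_div_iff_mul_le hG]
    have hd := Nat.div_add_mod (j*G-1) n
    have hm : (j*G-1) % n < n := Nat.mod_lt _ hn
    have e3 : ((j*G-1)/n + 1)*n = n*((j*G-1)/n) + n := by ring
    omega

namespace HPS
variable (S : HPS) (χ : ℝ)

/-- the pair of endpoints of group `j` (out of `G`) of children of `σ` at level `k` -/
def hullP (k G : ℕ) (p : List ℕ × ℕ) : ℝ × ℝ :=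
  (S.a (p.1 ++ [p.2 * S.n k / G + 1]), S.b (p.1 ++ [(p.2 + 1) * S.n k / G]))

/-- the branches at sub-level `t` between `E_{k-1}*` and `E_k*` -/
def grpBr (k t : ℕ) : Finset (ℝ × ℝ) :=
  ((WordsF S.n (k-1)) ×ˢ Finset.range ((Mconst χ)^t)).image (S.hullP k ((Mconst χ)^t))

/-- the full branch sequence -/
def BrF (m : ℕ) : Finset (ℝ × ℝ) :=
  if m = 0 then S.grpBr χ 1 0
  else if m = S.mIdx χ (S.kOf χ m) then S.grpBr χ (S.kOf χ m + 1) 0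
  else S.grpBr χ (S.kOf χ m) (m - S.mIdx χ (S.kOf χ m - 1))

def LevelOK (k t : ℕ) : Prop := 1 ≤ k ∧ t < S.ik χ k

lemma M_pos {χ : ℝ} (hχ : 1 ≤ χ) : 0 < Mconst χ := by have := Mconst_ge3 hχ; omega

lemma G_pos {χ : ℝ} (hχ : 1 ≤ χ) (t : ℕ) : 0 < (Mconst χ)^t := pow_pos (M_pos hχ) t

lemma Mpow_succ_le_n (hχ : 1 ≤ χ) {k t : ℕ} (hOK : S.LevelOK χ k t) (ht : 1 ≤ t) :
    (Mconst χ)^(t+1) ≤ S.n k := by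
  obtain ⟨hk, hik⟩ := hOK
  have h2 : 2 ≤ S.ik χ k := by omega
  calc (Mconst χ)^(t+1) ≤ (Mconst χ)^(S.ik χ k) :=
        Nat.pow_le_pow_right (by have := Mconst_ge3 hχ; omega) (by omega)
    _ ≤ S.n k := S.M_pow_le_nk hχ hk h2

lemma G_le_n (hχ : 1 ≤ χ) {k t : ℕ} (hOK : S.LevelOK χ k t) : (Mconst χ)^t ≤ S.n k := by
  cases t with
  | zero => simpa using by have := S.hn k hOK.1; omega
  | succ t' =>
    calc (Mconst χ)^(t'+1) ≤ (Mconst χ)^(t'+2) :=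
          Nat.pow_le_pow_right (by have := Mconst_ge3 hχ; omega) (by omega)
      _ ≤ S.n k := S.Mpow_succ_le_n χ hχ hOK (by omega)

/-- shape of the branch sequence -/
lemma brF_shape (m : ℕ) : ∃ k t, S.LevelOK χ k t ∧ m = S.mIdx χ (k-1) + t ∧
    S.BrF χ m = S.grpBr χ k t := by
  rcases Nat.eq_zero_or_pos m with rfl | hm
  · exact ⟨1, 0, ⟨le_rfl, S.ik_pos χ 1⟩, by simp [S.mIdx_zero χ], by simp [BrF]⟩
  · have hle := S.kOf_le_mIdx χ m
    have hlt := S.mIdx_pred_lt χ (m := m) hm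
    have hpos := S.kOf_pos χ (m := m) hm
    by_cases he : m = S.mIdx χ (S.kOf χ m)
    · refine ⟨(S.kOf χ m) + 1, 0, ⟨by omega, S.ik_pos χ ((S.kOf χ m)+1)⟩, by simpa using he, ?_⟩
      rw [BrF, if_neg (by omega), if_pos (by exact he)]
    · have hmlt : m < S.mIdx χ (S.kOf χ m) := by omega
      have hsucc : S.mIdx χ (S.kOf χ m) = S.mIdx χ ((S.kOf χ m)-1) + S.ik χ (S.kOf χ m) := by
        have := S.mIdx_succ χ ((S.kOf χ m)-1)
        rwa [show (S.kOf χ m) - 1 + 1 = (S.kOf χ m) by omega] at this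
      refine ⟨(S.kOf χ m), m - S.mIdx χ ((S.kOf χ m)-1), ⟨hpos, by omega⟩, by omega, ?_⟩
      rw [BrF, if_neg (by omega), if_neg (by exact he)]

/-- shape of the successor level -/
lemma brF_succ_shape {m k t : ℕ} (hOK : S.LevelOK χ k t) (hm : m = S.mIdx χ (k-1) + t) :
    (t + 1 < S.ik χ k ∧ S.BrF χ (m+1) = S.grpBr χ k (t+1)) ∨
    (t + 1 = S.ik χ k ∧ S.BrF χ (m+1) = S.grpBr χ (k+1) 0) := by
  obtain ⟨hk, hik⟩ := hOK
  have hsucc : S.mIdx χ k = S.mIdx χ (k-1) + S.ik χ k := by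
    have := S.mIdx_succ χ (k-1)
    rwa [show k - 1 + 1 = k by omega] at this
  have hub : m + 1 ≤ S.mIdx χ k := by omega
  have hko : S.kOf χ (m+1) = k := by
    have h1 : S.kOf χ (m+1) ≤ k := S.kOf_min χ hub
    have h2 : k ≤ S.kOf χ (m+1) := by
      by_contra hh
      push_neg at hh
      have h3 : S.mIdx χ (S.kOf χ (m+1)) ≤ S.mIdx χ (k-1) :=
        (S.mIdx_strictMono χ).monotone (by omega)
      have := S.kOf_le_mIdx χ (m+1)
      omega
    omega
  by_cases he : t + 1 = S.ik χ k
  · right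
    refine ⟨he, ?_⟩
    rw [BrF, if_neg (by omega), hko, if_pos (by omega)]
  · left
    refine ⟨by omega, ?_⟩
    rw [BrF, if_neg (by omega), hko, if_neg (by omega)]
    congr 1
    omega

end HPS

namespace HPS
variable (S : HPS) (χ : ℝ)

lemma mem_grpBr {k t : ℕ} {q : ℝ × ℝ} :
    q ∈ S.grpBr χ k t ↔ ∃ σ ∈ WordsF S.n (k-1), ∃ j < (Mconst χ)^t,
      q = S.hullP k ((Mconst χ)^t) (σ, j) := by
  simp only [grpBr, Finset.mem_image, Finset.mem_product, Finset.mem_range, Prod.exists]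
  constructor
  · rintro ⟨σ, j, ⟨h1, h2⟩, rfl⟩; exact ⟨σ, h1, j, h2, rfl⟩
  · rintro ⟨σ, h1, j, h2, rfl⟩; exact ⟨σ, j, ⟨h1, h2⟩, rfl⟩

lemma hullP_def (k G : ℕ) (σ : List ℕ) (j : ℕ) :
    S.hullP k G (σ, j) = (S.a (σ ++ [j * S.n k / G + 1]), S.b (σ ++ [(j+1) * S.n k / G])) := rfl

/-- all the standing facts about one group parameter -/
lemma param_facts (hχ : 1 ≤ χ) {k t : ℕ} (hOK : S.LevelOK χ k t) {σ : List ℕ} {j : ℕ}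
    (hσ : σ ∈ WordsF S.n (k-1)) (hj : j < (Mconst χ)^t) :
    σ.length + 1 = k ∧ ValidWord S.n σ ∧
    1 ≤ j * S.n k / (Mconst χ)^t + 1 ∧
    j * S.n k / (Mconst χ)^t + 1 ≤ (j+1) * S.n k / (Mconst χ)^t ∧
    (j+1) * S.n k / (Mconst χ)^t ≤ S.n k := by
  obtain ⟨hl, hv⟩ := mem_wordsF.mp hσ
  have hk : 1 ≤ k := hOK.1
  have hG := G_pos hχ t
  have hGn := S.G_le_n χ hχ hOK
  exact ⟨by omega, hv, Nat.le_add_left 1 _, grp_lo_le_hi hG hGn, grp_hi_le_n hG hj⟩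

lemma hull_lt (hχ : 1 ≤ χ) {k t : ℕ} (hOK : S.LevelOK χ k t) {σ : List ℕ} {j : ℕ}
    (hσ : σ ∈ WordsF S.n (k-1)) (hj : j < (Mconst χ)^t) :
    (S.hullP k ((Mconst χ)^t) (σ, j)).1 < (S.hullP k ((Mconst χ)^t) (σ, j)).2 := by
  obtain ⟨hl1, hv, hlo1, hlohi, hhin⟩ := S.param_facts χ hχ hOK hσ hj
  rw [hullP_def]
  have h1 : S.a (σ ++ [j * S.n k / (Mconst χ)^t + 1]) ≤
      S.a (σ ++ [(j+1) * S.n k / (Mconst χ)^t]) :=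
    S.chain_aa hv hlo1 hlohi (by rw [hl1]; exact hhin)
  have h2 : S.a (σ ++ [(j+1) * S.n k / (Mconst χ)^t]) <
      S.b (σ ++ [(j+1) * S.n k / (Mconst χ)^t]) :=
    S.ab_lt (valid_append hv (by omega) (by rw [hl1]; exact hhin))
  exact lt_of_le_of_lt h1 h2

/-- separation of distinct branches at one level -/
lemma hull_sep (hχ : 1 ≤ χ) {k t : ℕ} (hOK : S.LevelOK χ k t) {σ τ : List ℕ} {i j : ℕ}
    (hσ : σ ∈ WordsF S.n (k-1)) (hτ : τ ∈ WordsF S.n (k-1))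
    (hi : i < (Mconst χ)^t) (hj : j < (Mconst χ)^t) (hne : (σ, i) ≠ (τ, j)) :
    (S.hullP k ((Mconst χ)^t) (σ, i)).2 ≤ (S.hullP k ((Mconst χ)^t) (τ, j)).1 ∨
    (S.hullP k ((Mconst χ)^t) (τ, j)).2 ≤ (S.hullP k ((Mconst χ)^t) (σ, i)).1 := by
  obtain ⟨hl1, hv, hlo1, hlohi, hhin⟩ := S.param_facts χ hχ hOK hσ hi
  obtain ⟨hl1', hv', hlo1', hlohi', hhin'⟩ := S.param_facts χ hχ hOK hτ hj
  simp only [hullP_def]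
  by_cases hst : σ = τ
  · subst hst
    have hij : i ≠ j := by intro hh; exact hne (by rw [hh])
    have key : ∀ i' j' : ℕ, i' < j' → j' < (Mconst χ)^t →
        S.b (σ ++ [(i'+1) * S.n k / (Mconst χ)^t]) ≤
        S.a (σ ++ [j' * S.n k / (Mconst χ)^t + 1]) := by
      intro i' j' hlt hj'
      obtain ⟨-, -, -, hA, hB⟩ := S.param_facts χ hχ hOK hσ
        (show i' < (Mconst χ)^t by omega)
      obtain ⟨-, -, -, hA', hB'⟩ := S.param_facts χ hχ hOK hσ hj'
      have hmono : (i'+1) * S.n k / (Mconst χ)^t ≤ j' * S.n k / (Mconst χ)^t :=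
        Nat.div_le_div_right (Nat.mul_le_mul_right _ (by omega))
      exact S.chain_ba hv (le_trans (Nat.le_add_left 1 _) hA) (by omega) (by rw [hl1]; omega)
    rcases Nat.lt_or_ge i j with hlt | hge
    · exact Or.inl (key i j hlt hj)
    · exact Or.inr (key j i (by omega) hi)
  · rcases S.order_words (mem_wordsF.mpr ⟨(mem_wordsF.mp hσ).1, hv⟩)
      (mem_wordsF.mpr ⟨(mem_wordsF.mp hτ).1, hv'⟩) hst with hh | hh
    · left
      calc S.b (σ ++ [(i+1) * S.n k / (Mconst χ)^t]) ≤ S.b σ :=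
            (S.child_sub hv (by omega) (by rw [hl1]; exact hhin)).2
        _ ≤ S.a τ := hh
        _ ≤ S.a (τ ++ [j * S.n k / (Mconst χ)^t + 1]) :=
            (S.child_sub hv' hlo1' (by rw [hl1']; omega)).1
    · right
      calc S.b (τ ++ [(j+1) * S.n k / (Mconst χ)^t]) ≤ S.b τ :=
            (S.child_sub hv' (by omega) (by rw [hl1']; exact hhin')).2
        _ ≤ S.a σ := hh
        _ ≤ S.a (σ ++ [i * S.n k / (Mconst χ)^t + 1]) :=
            (S.child_sub hv hlo1 (by rw [hl1]; omega)).1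

/-- injectivity of the parametrisation -/
lemma hull_inj (hχ : 1 ≤ χ) {k t : ℕ} (hOK : S.LevelOK χ k t) {σ τ : List ℕ} {i j : ℕ}
    (hσ : σ ∈ WordsF S.n (k-1)) (hτ : τ ∈ WordsF S.n (k-1))
    (hi : i < (Mconst χ)^t) (hj : j < (Mconst χ)^t)
    (heq : S.hullP k ((Mconst χ)^t) (σ, i) = S.hullP k ((Mconst χ)^t) (τ, j)) :
    (σ, i) = (τ, j) := by
  by_contra hne
  have h1 := S.hull_lt χ hχ hOK hσ hi
  have h2 := S.hull_lt χ hχ hOK hτ hj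
  rcases S.hull_sep χ hχ hOK hσ hτ hi hj hne with hh | hh <;> rw [heq] at * <;> linarith

end HPS

namespace HPS
variable (S : HPS) (χ : ℝ)

lemma levelOK_of_succ {k t : ℕ} (hOK : S.LevelOK χ k (t+1)) : S.LevelOK χ k t :=
  ⟨hOK.1, by have := hOK.2; omega⟩

lemma jdiv_lt {χ : ℝ} (hχ : 1 ≤ χ) {t j : ℕ} (hj : j < (Mconst χ)^(t+1)) :
    j / Mconst χ < (Mconst χ)^t := by
  rw [Nat.div_lt_iff_lt_mul (M_pos hχ)]
  rwa [← pow_succ] 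

/-- a sub-group is contained in its parent group -/
lemma nest_incl (hχ : 1 ≤ χ) {k t : ℕ} (hOK : S.LevelOK χ k (t+1)) {σ : List ℕ} {j : ℕ}
    (hσ : σ ∈ WordsF S.n (k-1)) (hj : j < (Mconst χ)^(t+1)) :
    Set.Icc (S.hullP k ((Mconst χ)^(t+1)) (σ, j)).1 (S.hullP k ((Mconst χ)^(t+1)) (σ, j)).2 ⊆
    Set.Icc (S.hullP k ((Mconst χ)^t) (σ, j / Mconst χ)).1
      (S.hullP k ((Mconst χ)^t) (σ, j / Mconst χ)).2 := by
  have hjM := jdiv_lt hχ hj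
  obtain ⟨hl1, hv, hlo1, hlohi, hhin⟩ := S.param_facts χ hχ hOK hσ hj
  obtain ⟨-, -, hlo1', hlohi', hhin'⟩ :=
    S.param_facts χ hχ (S.levelOK_of_succ χ hOK) hσ hjM
  simp only [hullP_def]
  have hM := M_pos hχ
  apply Set.Icc_subset_Icc
  · refine S.chain_aa hv hlo1' ?_ (by rw [hl1]; omega)
    have := grp_nest_lo (n := S.n k) (t := t) (j := j) hM
    omega
  · refine S.chain_bb hv (le_trans (Nat.le_add_left 1 _) hlohi) ?_ (by rw [hl1]; omega)
    exact grp_nest_hi hM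

/-- a level-`k` trimmed interval is inside the `k`-th level basic interval -/
lemma star_incl (hχ : 1 ≤ χ) {k : ℕ} {σ' : List ℕ} (hσ' : σ' ∈ WordsF S.n k) :
    Set.Icc (S.hullP (k+1) 1 (σ', 0)).1 (S.hullP (k+1) 1 (σ', 0)).2 ⊆
    Set.Icc (S.a σ') (S.b σ') := by
  obtain ⟨hl, hv⟩ := mem_wordsF.mp hσ'
  have hn2 : 2 ≤ S.n (k+1) := S.hn (k+1) (by omega)
  simp only [hullP_def, Nat.zero_mul, Nat.zero_div, Nat.zero_add, Nat.one_mul, Nat.div_one]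
  apply Set.Icc_subset_Icc
  · exact (S.child_sub hv le_rfl (by rw [hl]; omega)).1
  · exact (S.child_sub hv (by omega) (by rw [hl])).2

/-- a level-`k` basic interval is inside the group containing it -/
lemma parent_incl (hχ : 1 ≤ χ) {k t : ℕ} (hOK : S.LevelOK χ k t) {σ : List ℕ} {j : ℕ}
    (hσ : σ ∈ WordsF S.n (k-1)) (hj1 : 1 ≤ j) (hj2 : j ≤ S.n k) :
    Set.Icc (S.a (σ ++ [j])) (S.b (σ ++ [j])) ⊆
    Set.Icc (S.hullP k ((Mconst χ)^t) (σ, (j * (Mconst χ)^t - 1) / S.n k)).1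
      (S.hullP k ((Mconst χ)^t) (σ, (j * (Mconst χ)^t - 1) / S.n k)).2 := by
  have hG := G_pos hχ t
  obtain ⟨hjlt, hjlo, hjhi⟩ := grp_mem (n := S.n k) hG hj1 hj2
  obtain ⟨hl1, hv, hlo1, hlohi, hhin⟩ := S.param_facts χ hχ hOK hσ hjlt
  simp only [hullP_def]
  apply Set.Icc_subset_Icc
  · exact S.chain_aa hv hlo1 hjlo (by rw [hl1]; omega)
  · exact S.chain_bb hv hj1 hjhi (by rw [hl1]; omega)

lemma interior_trick {p q : ℝ × ℝ} (hq : q.1 < q.2)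
    (h : Set.Icc q.1 q.2 ⊆ Set.Icc p.1 p.2) : Set.Ioo q.1 q.2 ⊆ Set.Ioo p.1 p.2 := by
  have := interior_mono h
  rwa [interior_Icc, interior_Icc] at this

/-- identification of the canonical parent -/
lemma parent_unique (hχ : 1 ≤ χ) {k t : ℕ} (hOK : S.LevelOK χ k t) {σ τ : List ℕ}
    {i j : ℕ} (hσ : σ ∈ WordsF S.n (k-1)) (hτ : τ ∈ WordsF S.n (k-1))
    (hi : i < (Mconst χ)^t) (hj : j < (Mconst χ)^t) {q : ℝ × ℝ} (hqlt : q.1 < q.2)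
    (h1 : Set.Icc q.1 q.2 ⊆ Set.Icc (S.hullP k ((Mconst χ)^t) (σ, i)).1
      (S.hullP k ((Mconst χ)^t) (σ, i)).2)
    (h2 : Set.Icc q.1 q.2 ⊆ Set.Icc (S.hullP k ((Mconst χ)^t) (τ, j)).1
      (S.hullP k ((Mconst χ)^t) (τ, j)).2) :
    σ = τ ∧ i = j := by
  by_contra hne
  have hne' : (σ, i) ≠ (τ, j) := by
    intro hh
    exact hne ⟨congrArg Prod.fst hh, congrArg Prod.snd hh⟩
  obtain ⟨x, hx⟩ := Set.nonempty_Ioo.mpr hqlt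
  have hx1 := interior_trick hqlt h1 hx
  have hx2 := interior_trick hqlt h2 hx
  rcases S.hull_sep χ hχ hOK hσ hτ hi hj hne' with hh | hh
  · exact absurd (lt_of_lt_of_le hx1.2 (le_trans hh hx2.1.le)) (lt_irrefl x)
  · exact absurd (lt_of_lt_of_le hx2.2 (le_trans hh hx1.1.le)) (lt_irrefl x)

end HPS

lemma ndiv_ceil_le {n G : ℕ} (hG : 0 < G) : (n + G - 1)/G ≤ n/G + 1 := by
  have hxy : n + G - 1 = n + (G-1) := by omega
  have hB := Nat.add_div hG (a := n) (b := G-1)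
  have h1 : (G-1)/G = 0 := Nat.div_eq_of_lt (by omega)
  rw [hxy, hB, h1]
  split_ifs <;> omega

namespace HPS
variable (S : HPS) (χ : ℝ)

lemma two_le_ndiv (hχ : 1 ≤ χ) {k t : ℕ} (hOK : S.LevelOK χ k t) :
    2 ≤ S.n k / (Mconst χ)^t := by
  cases t with
  | zero => simpa using S.hn k hOK.1
  | succ t' =>
    have hM3 := Mconst_ge3 hχ
    have h1 : (Mconst χ)^(t'+2) ≤ S.n k := S.Mpow_succ_le_n χ hχ hOK (by omega)
    have h2 : Mconst χ * (Mconst χ)^(t'+1) ≤ S.n k := by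
      rwa [← pow_succ'] 
    have := (Nat.le_div_iff_mul_le (G_pos hχ (t'+1))).mpr
      h2
    omega

lemma sum_xi_nonneg {k : ℕ} (hk : 1 ≤ k) (s : Finset ℕ) (hs : ∀ l ∈ s, l ≤ S.n k) :
    0 ≤ ∑ l ∈ s, S.ξ k l :=
  Finset.sum_nonneg fun l hl => S.hξ k hk l (hs l hl)

/-- comparability of branch lengths at one level -/
lemma hull_comp (hχ : 1 ≤ χ) (hgap : GapComparable S χ) {k t : ℕ} (hOK : S.LevelOK χ k t)
    {σ τ : List ℕ} {i j : ℕ} (hσ : σ ∈ WordsF S.n (k-1)) (hτ : τ ∈ WordsF S.n (k-1))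
    (hi : i < (Mconst χ)^t) (hj : j < (Mconst χ)^t) :
    (S.hullP k ((Mconst χ)^t) (σ, i)).2 - (S.hullP k ((Mconst χ)^t) (σ, i)).1 ≤
    2 * χ * ((S.hullP k ((Mconst χ)^t) (τ, j)).2 - (S.hullP k ((Mconst χ)^t) (τ, j)).1) := by
  obtain ⟨hl1, hv, hlo1, hlohi, hhin⟩ := S.param_facts χ hχ hOK hσ hi
  obtain ⟨hl1', hv', hlo1', hlohi', hhin'⟩ := S.param_facts χ hχ hOK hτ hj
  have hk : 1 ≤ k := hOK.1
  have hG := G_pos hχ t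
  have hn2 : 2 ≤ S.n k := S.hn k hk
  set G := (Mconst χ)^t with hGdef
  set n := S.n k with hndef
  -- sizes
  have hsaU : (i+1)*n/G ≤ i*n/G + (n/G + 1) :=
    le_trans (grp_size_le hG) (by have := ndiv_ceil_le (n := n) hG; omega)
  have hsbL : j*n/G + n/G ≤ (j+1)*n/G := grp_size_ge
  have hnG2 : 2 ≤ n / G := S.two_le_ndiv χ hχ hOK
  -- the two lengths via sum_len
  have eI := S.sum_len hv (p := i*n/G + 1) (q := (i+1)*n/G) hlo1 hlohi (by rw [hl1]; omega)
  have eJ := S.sum_len hv' (p := j*n/G + 1) (q := (j+1)*n/G) hlo1' hlohi' (by rw [hl1']; omega)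
  rw [hl1, show σ.length = k - 1 from by omega] at eI
  rw [hl1', show τ.length = k - 1 from by omega] at eJ
  simp only [hullP_def]
  rw [eI, eJ]
  set L := S.c k * S.len (k-1) with hLdef
  have hLpos : 0 < L := mul_pos (S.hc k hk) (S.len_pos (k-1))
  set aN := (i+1)*n/G - (i*n/G + 1) with haN
  set bN := (j+1)*n/G - (j*n/G + 1) with hbN
  have hcastI : (i+1)*n/G - (i*n/G + 1) + 1 = aN + 1 := rfl
  have haU : aN ≤ n/G := by omega
  have hbL : 1 ≤ bN := by omega
  have hab2 : aN ≤ 2 * bN := by omega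
  have hcard : ((i+1)*n/G - (i*n/G+1) + 1 : ℕ) = aN + 1 := rfl
  have hcardJ : ((j+1)*n/G - (j*n/G+1) + 1 : ℕ) = bN + 1 := rfl
  rw [hcard, hcardJ]
  set SA := ∑ l ∈ Finset.Ico (i*n/G + 1) ((i+1)*n/G), S.ξ k l with hSA
  set SB := ∑ l ∈ Finset.Ico (j*n/G + 1) ((j+1)*n/G), S.ξ k l with hSB
  have hSBnn : 0 ≤ SB := S.sum_xi_nonneg hk _ (fun l hl => by
    rw [Finset.mem_Ico] at hl; omega)
  have hSAnn : 0 ≤ SA := S.sum_xi_nonneg hk _ (fun l hl => by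
    rw [Finset.mem_Ico] at hl; omega)
  -- gap comparison
  have key : (bN : ℝ) * SA ≤ χ * ((aN : ℝ) * SB) := by
    have h1 : ∀ l' ∈ Finset.Ico (j*n/G + 1) ((j+1)*n/G),
        SA ≤ (aN : ℝ) * (χ * S.ξ k l') := by
      intro l' hl'
      rw [Finset.mem_Ico] at hl'
      have := Finset.sum_le_card_nsmul (Finset.Ico (i*n/G + 1) ((i+1)*n/G))
        (fun l => S.ξ k l) (χ * S.ξ k l') (fun l hl => by
          rw [Finset.mem_Ico] at hl
          exact hgap k hk l l' (by omega) (by omega) (by omega) (by omega))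
      rw [Nat.card_Ico] at this
      rw [hSA]
      calc ∑ l ∈ Finset.Ico (i*n/G + 1) ((i+1)*n/G), S.ξ k l
          ≤ ((i+1)*n/G - (i*n/G + 1)) • (χ * S.ξ k l') := this
        _ = (aN : ℝ) * (χ * S.ξ k l') := by rw [nsmul_eq_mul]
      
    calc (bN : ℝ) * SA = ∑ _l' ∈ Finset.Ico (j*n/G + 1) ((j+1)*n/G), SA := by
          rw [Finset.sum_const, Nat.card_Ico, nsmul_eq_mul]
      _ ≤ ∑ l' ∈ Finset.Ico (j*n/G + 1) ((j+1)*n/G), (aN : ℝ) * (χ * S.ξ k l') :=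
          Finset.sum_le_sum h1
      _ = χ * ((aN : ℝ) * SB) := by rw [← Finset.mul_sum, hSB, ← Finset.mul_sum]; ring
  have hSA2 : SA ≤ 2 * χ * SB := by
    have hbpos : (0:ℝ) < bN := by exact_mod_cast hbL
    have h2 : (aN : ℝ) ≤ 2 * bN := by exact_mod_cast hab2
    have hχ0 : (0:ℝ) ≤ χ := by linarith
    have : (bN : ℝ) * SA ≤ (bN : ℝ) * (2 * χ * SB) := by
      calc (bN : ℝ) * SA ≤ χ * ((aN : ℝ) * SB) := key
        _ ≤ χ * ((2 * bN : ℝ) * SB) := by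
            apply mul_le_mul_of_nonneg_left (mul_le_mul_of_nonneg_right h2 hSBnn) hχ0
        _ = (bN : ℝ) * (2 * χ * SB) := by ring
    exact le_of_mul_le_mul_left this hbpos
  have hAL : ((aN : ℝ) + 1) * L ≤ 2 * χ * (((bN : ℝ) + 1) * L) := by
    have h2 : (aN : ℝ) + 1 ≤ 2 * ((bN : ℝ) + 1) := by
      have : (aN : ℝ) ≤ 2 * bN := by exact_mod_cast hab2
      linarith
    have h3 : 2 * ((bN : ℝ) + 1) ≤ 2 * χ * ((bN : ℝ) + 1) := by
      have hb0 : (0:ℝ) ≤ (bN : ℝ) + 1 := by positivity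
      nlinarith
    nlinarith [hLpos.le, mul_le_mul_of_nonneg_right h2 hLpos.le,
      mul_le_mul_of_nonneg_right h3 hLpos.le]
  push_cast
  push_cast at hAL
  linarith

end HPS

namespace HPS
variable (S : HPS) (χ : ℝ)

lemma count_T3 (hχ : 1 ≤ χ) {k t : ℕ} (hOK1 : S.LevelOK χ k (t+1)) {σ : List ℕ} {j : ℕ}
    (hσ : σ ∈ WordsF S.n (k-1)) (hj : j < (Mconst χ)^t) :
    {q ∈ (S.grpBr χ k (t+1) : Set (ℝ × ℝ)) |
      Set.Icc q.1 q.2 ⊆ Set.Icc (S.hullP k ((Mconst χ)^t) (σ, j)).1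
        (S.hullP k ((Mconst χ)^t) (σ, j)).2}.ncard ≤ Mconst χ ^ 2 := by
  have hOK := S.levelOK_of_succ χ hOK1
  set F := (Finset.Ico (j * Mconst χ) (j * Mconst χ + Mconst χ)).image
      (fun r => S.hullP k ((Mconst χ)^(t+1)) (σ, r)) with hF
  have hsub : {q ∈ (S.grpBr χ k (t+1) : Set (ℝ × ℝ)) |
      Set.Icc q.1 q.2 ⊆ Set.Icc (S.hullP k ((Mconst χ)^t) (σ, j)).1
        (S.hullP k ((Mconst χ)^t) (σ, j)).2} ⊆ (F : Set (ℝ × ℝ)) := by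
    rintro q ⟨hq, hsubq⟩
    rw [Finset.mem_coe, S.mem_grpBr χ] at hq
    obtain ⟨τ, hτ, j', hj', rfl⟩ := hq
    have hqlt := S.hull_lt χ hχ hOK1 hτ hj'
    have hP := S.nest_incl χ hχ hOK1 hτ hj'
    obtain ⟨rfl, hjj⟩ := S.parent_unique χ hχ hOK hσ hτ hj (jdiv_lt hχ hj')
      hqlt hsubq hP
    rw [hF]
    simp only [Finset.coe_image, Set.mem_image, Finset.mem_coe, Finset.mem_Ico]
    refine ⟨j', ⟨?_, ?_⟩, rfl⟩
    · have hd := Nat.div_add_mod j' (Mconst χ)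
      have he : j * Mconst χ = Mconst χ * (j'/Mconst χ) := by rw [hjj, mul_comm]
      omega
    · have hd := Nat.div_add_mod j' (Mconst χ)
      have hm : j' % Mconst χ < Mconst χ := Nat.mod_lt _ (M_pos hχ)
      have he : j * Mconst χ = Mconst χ * (j'/Mconst χ) := by rw [hjj, mul_comm]
      omega
  calc {q ∈ (S.grpBr χ k (t+1) : Set (ℝ × ℝ)) |
      Set.Icc q.1 q.2 ⊆ Set.Icc (S.hullP k ((Mconst χ)^t) (σ, j)).1
        (S.hullP k ((Mconst χ)^t) (σ, j)).2}.ncard ≤ (F : Set (ℝ × ℝ)).ncard :=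
        Set.ncard_le_ncard hsub F.finite_toSet
    _ = F.card := Set.ncard_coe_finset F
    _ ≤ (Finset.Ico (j * Mconst χ) (j * Mconst χ + Mconst χ)).card := Finset.card_image_le
    _ = Mconst χ := by rw [Nat.card_Ico]; omega
    _ ≤ Mconst χ ^ 2 := by nlinarith [M_pos hχ]

lemma size_M2 (hχ : 1 ≤ χ) {k t : ℕ} (hOK : S.LevelOK χ k t) (hlast : t + 1 = S.ik χ k)
    {j : ℕ} : (j+1) * S.n k / (Mconst χ)^t + 1 - (j * S.n k / (Mconst χ)^t + 1) ≤
      Mconst χ ^ 2 := by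
  have hG := G_pos hχ t
  have hn := S.nk_lt_M_pow hχ k
  have hsz := grp_size_le (n := S.n k) (G := (Mconst χ)^t) (j := j) hG
  have hdiv : (S.n k + (Mconst χ)^t - 1) / (Mconst χ)^t ≤ Mconst χ ^ 2 := by
    have hpow : (Mconst χ)^t * Mconst χ ^ 2 = (Mconst χ)^(S.ik χ k + 1) := by
      rw [← pow_add]
      congr 1
      omega
    have hle : S.n k + (Mconst χ)^t - 1 ≤ (Mconst χ)^t * Mconst χ ^2 + ((Mconst χ)^t - 2) := by
      omega
    calc (S.n k + (Mconst χ)^t - 1) / (Mconst χ)^t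
        ≤ ((Mconst χ)^t * Mconst χ ^2 + ((Mconst χ)^t - 2)) / (Mconst χ)^t :=
          Nat.div_le_div_right hle
      _ = Mconst χ ^ 2 + ((Mconst χ)^t - 2) / (Mconst χ)^t := Nat.mul_add_div hG _ _
      _ = Mconst χ ^ 2 := by rw [Nat.div_eq_of_lt (by omega : (Mconst χ)^t - 2 < (Mconst χ)^t), Nat.add_zero]
  rw [Nat.sub_le_iff_le_add]
  calc (j+1) * S.n k / (Mconst χ)^t + 1
      ≤ (j * S.n k / (Mconst χ)^t + (S.n k + (Mconst χ)^t - 1) / (Mconst χ)^t) + 1 :=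
        Nat.add_le_add_right hsz 1
    _ ≤ Mconst χ ^ 2 + (j * S.n k / (Mconst χ)^t + 1) := by omega

lemma count_T4 (hχ : 1 ≤ χ) {k t : ℕ} (hOK : S.LevelOK χ k t) (hlast : t + 1 = S.ik χ k)
    {σ : List ℕ} {j : ℕ} (hσ : σ ∈ WordsF S.n (k-1)) (hj : j < (Mconst χ)^t) :
    {q ∈ (S.grpBr χ (k+1) 0 : Set (ℝ × ℝ)) |
      Set.Icc q.1 q.2 ⊆ Set.Icc (S.hullP k ((Mconst χ)^t) (σ, j)).1
        (S.hullP k ((Mconst χ)^t) (σ, j)).2}.ncard ≤ Mconst χ ^ 2 := by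
  obtain ⟨hl1, hv, hlo1, hlohi, hhin⟩ := S.param_facts χ hχ hOK hσ hj
  set F := (Finset.Icc (j * S.n k / (Mconst χ)^t + 1) ((j+1) * S.n k / (Mconst χ)^t)).image
      (fun j'' => S.hullP (k+1) 1 (σ ++ [j''], 0)) with hF
  have hsub : {q ∈ (S.grpBr χ (k+1) 0 : Set (ℝ × ℝ)) |
      Set.Icc q.1 q.2 ⊆ Set.Icc (S.hullP k ((Mconst χ)^t) (σ, j)).1
        (S.hullP k ((Mconst χ)^t) (σ, j)).2} ⊆ (F : Set (ℝ × ℝ)) := by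
    rintro q ⟨hq, hsubq⟩
    rw [Finset.mem_coe, S.mem_grpBr χ] at hq
    obtain ⟨τ', hτ', r, hr, rfl⟩ := hq
    have hr0 : r = 0 := by simpa using hr
    subst hr0
    rw [show k + 1 - 1 = k from rfl] at hτ'
    obtain ⟨hlτ', hvτ'⟩ := mem_wordsF.mp hτ'
    obtain ⟨τ, j'', rfl⟩ : ∃ τ j'', τ' = τ ++ [j''] := by
      refine ⟨τ'.dropLast, τ'.getLast ?_, (List.dropLast_append_getLast _).symm⟩
      intro hh; rw [hh] at hlτ'; simp at hlτ'; omega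
    obtain ⟨hvτ, hj''1, hj''2⟩ := valid_of_append hvτ'
    have hlτ : τ.length = k - 1 := by simp at hlτ'; omega
    have hτm : τ ∈ WordsF S.n (k-1) := mem_wordsF.mpr ⟨hlτ, hvτ⟩
    have hj''2' : j'' ≤ S.n k := by rwa [show τ.length + 1 = k from by omega] at hj''2
    have hOK0 : S.LevelOK χ (k+1) 0 := ⟨by omega, S.ik_pos χ (k+1)⟩
    have hqlt : (S.hullP (k+1) 1 (τ ++ [j''], 0)).1 < (S.hullP (k+1) 1 (τ ++ [j''], 0)).2 := by
      have := S.hull_lt χ hχ hOK0 (σ := τ ++ [j'']) (j := 0)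
        (by rw [show k + 1 - 1 = k from rfl]; exact hτ') (by simp [G_pos hχ])
      simpa using this
    have hstar := S.star_incl χ hχ (σ' := τ ++ [j'']) hτ'
    have hpar := S.parent_incl χ hχ hOK hτm hj''1 hj''2'
    have hsub2 : Set.Icc (S.hullP (k+1) 1 (τ ++ [j''], 0)).1
        (S.hullP (k+1) 1 (τ ++ [j''], 0)).2 ⊆
        Set.Icc (S.hullP k ((Mconst χ)^t) (τ, (j'' * (Mconst χ)^t - 1) / S.n k)).1
          (S.hullP k ((Mconst χ)^t) (τ, (j'' * (Mconst χ)^t - 1) / S.n k)).2 :=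
      le_trans hstar hpar
    have hjdxlt : (j'' * (Mconst χ)^t - 1) / S.n k < (Mconst χ)^t :=
      (grp_mem (G_pos hχ t) hj''1 hj''2').1
    obtain ⟨rfl, hjj⟩ := S.parent_unique χ hχ hOK hσ hτm hj hjdxlt hqlt hsubq hsub2
    rw [hF]
    simp only [Finset.coe_image, Set.mem_image, Finset.mem_coe, Finset.mem_Icc]
    obtain ⟨-, hA, hB⟩ := grp_mem (n := S.n k) (G_pos hχ t) hj''1 hj''2'
    rw [← hjj] at hA hB
    exact ⟨j'', ⟨hA, hB⟩, by norm_num⟩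
  calc {q ∈ (S.grpBr χ (k+1) 0 : Set (ℝ × ℝ)) |
      Set.Icc q.1 q.2 ⊆ Set.Icc (S.hullP k ((Mconst χ)^t) (σ, j)).1
        (S.hullP k ((Mconst χ)^t) (σ, j)).2}.ncard ≤ (F : Set (ℝ × ℝ)).ncard :=
        Set.ncard_le_ncard hsub F.finite_toSet
    _ = F.card := Set.ncard_coe_finset F
    _ ≤ (Finset.Icc (j * S.n k / (Mconst χ)^t + 1) ((j+1) * S.n k / (Mconst χ)^t)).card :=
        Finset.card_image_le
    _ ≤ Mconst χ ^ 2 := by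
        rw [Nat.card_Icc]
        exact S.size_M2 χ hχ hOK hlast (j := j)

lemma coe_grpBr0 (k : ℕ) : (S.grpBr χ (k+1) 0 : Set (ℝ × ℝ)) =
    {p : ℝ × ℝ | ∃ σ : List ℕ, σ.length = k ∧ ValidWord S.n σ ∧
      p = (S.aStar σ, S.bStar σ)} := by
  ext p
  rw [Finset.mem_coe, S.mem_grpBr χ]
  simp only [Set.mem_setOf_eq, pow_zero, Nat.lt_one_iff, show k + 1 - 1 = k from rfl]
  constructor
  · rintro ⟨σ, hσ, j, rfl, rfl⟩
    obtain ⟨hl, hv⟩ := mem_wordsF.mp hσ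
    refine ⟨σ, hl, hv, ?_⟩
    rw [hullP_def, S.aStar_eq hv, S.bStar_eq hv]
    simp [hl]
  · rintro ⟨σ, hl, hv, rfl⟩
    refine ⟨σ, mem_wordsF.mpr ⟨hl, hv⟩, 0, rfl, ?_⟩
    rw [hullP_def, S.aStar_eq hv, S.bStar_eq hv]
    simp [hl]

lemma union_grpBr0 (k : ℕ) :
    (⋃ p ∈ S.grpBr χ (k+1) 0, Set.Icc p.1 p.2) = S.EkStar k := by
  rw [EkStar]
  ext x
  simp only [Set.mem_iUnion, Finset.mem_coe, Set.mem_setOf_eq, exists_prop]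
  constructor
  · rintro ⟨p, hp, hx⟩
    have : p ∈ (S.grpBr χ (k+1) 0 : Set (ℝ × ℝ)) := hp
    rw [S.coe_grpBr0 χ] at this
    obtain ⟨σ, hl, hv, rfl⟩ := this
    exact ⟨σ, ⟨hl, hv⟩, hx⟩
  · rintro ⟨σ, ⟨hl, hv⟩, hx⟩
    refine ⟨(S.aStar σ, S.bStar σ), ?_, hx⟩
    have : (S.aStar σ, S.bStar σ) ∈ (S.grpBr χ (k+1) 0 : Set (ℝ × ℝ)) := by
      rw [S.coe_grpBr0 χ]
      exact ⟨σ, hl, hv, rfl⟩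
    exact this

lemma brF_mIdx (k : ℕ) : S.BrF χ (S.mIdx χ k) = S.grpBr χ (k+1) 0 := by
  rcases Nat.eq_zero_or_pos k with rfl | hk
  · rw [S.mIdx_zero χ, BrF, if_pos rfl]
  · have hm : 1 ≤ S.mIdx χ k := le_trans hk (S.self_le_mIdx χ k)
    rw [BrF, if_neg (by omega), S.kOf_mIdx χ k, if_pos rfl]

lemma grpBr_nonempty (hχ : 1 ≤ χ) (k t : ℕ) : (S.grpBr χ k t).Nonempty := by
  apply Finset.Nonempty.image
  apply Finset.Nonempty.product
  · exact wordsF_nonempty S.hn _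
  · exact ⟨0, Finset.mem_range.mpr (G_pos hχ t)⟩

end HPS

/-- **Lemma 4.1.** For a homogeneous perfect set with comparable gaps there is a decreasing
sequence of closed sets `H_m` (each a finite union of closed intervals — its branches — with
pairwise disjoint interiors) with `E = ⋂ E_k = ⋂ E_k* = ⋂ H_m`, `H_{m_k} = E_k*`,
`2χ < M = ⌊2χ⌋+1`, each branch of `H_{m-1}` containing at most `M²` branches of `H_m`, and
`max_{I ∈ H_m} |I| ≤ 2χ · min_{I ∈ H_m} |I|`. -/
theorem exists_branch_sequence
    (S : HPS) (χ : ℝ) (hχ : 1 ≤ χ) (hgap : GapComparable S χ) :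
    2 * χ < (Mconst χ : ℝ) ∧
    ∃ Br : ℕ → Finset (ℝ × ℝ),
      -- each `H_m` is a nonempty finite union of nondegenerate closed intervals
      (∀ m, (Br m).Nonempty) ∧
      (∀ m, ∀ p ∈ Br m, p.1 < p.2) ∧
      -- branches have pairwise disjoint interiors
      (∀ m, ∀ p ∈ Br m, ∀ q ∈ Br m, p ≠ q → Set.Ioo p.1 p.2 ∩ Set.Ioo q.1 q.2 = ∅) ∧
      -- the sequence is decreasing under inclusion
      (∀ m, (⋃ p ∈ Br (m + 1), Set.Icc p.1 p.2) ⊆ ⋃ p ∈ Br m, Set.Icc p.1 p.2) ∧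
      -- `E = ⋂ E_k = ⋂ E_k* = ⋂ H_m`
      (S.E = ⋂ k, S.Ek k) ∧
      (S.E = ⋂ k, S.EkStar k) ∧
      (S.E = ⋂ m, ⋃ p ∈ Br m, Set.Icc p.1 p.2) ∧
      -- `H_{m_k} = E_k*` branchwise
      (∀ k, (Br (S.mIdx χ k) : Set (ℝ × ℝ)) =
        {p : ℝ × ℝ | ∃ σ : List ℕ, σ.length = k ∧ ValidWord S.n σ ∧
          p = (S.aStar σ, S.bStar σ)}) ∧
      -- each branch of `H_m` contains at most `M²` branches of `H_{m+1}`
      (∀ m, ∀ p ∈ Br m,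
        {q ∈ (Br (m + 1) : Set (ℝ × ℝ)) | Set.Icc q.1 q.2 ⊆ Set.Icc p.1 p.2}.ncard ≤
          (Mconst χ) ^ 2) ∧
      -- `max_{I ∈ H_m} |I| ≤ 2χ · min_{I ∈ H_m} |I|`
      (∀ m, ∀ p ∈ Br m, ∀ q ∈ Br m, p.2 - p.1 ≤ 2 * χ * (q.2 - q.1)) := by
  have hd2 : ∀ m, (⋃ p ∈ S.BrF χ (m + 1), Set.Icc p.1 p.2) ⊆
      ⋃ p ∈ S.BrF χ m, Set.Icc p.1 p.2 := by
    intro m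
    obtain ⟨k, t, hOK, hm, heq⟩ := S.brF_shape χ m
    rcases S.brF_succ_shape χ hOK hm with ⟨hlt, heq'⟩ | ⟨hlast, heq'⟩
    · -- within a block
      rw [heq, heq']
      intro x hx
      simp only [Set.mem_iUnion, Finset.mem_coe, exists_prop] at hx ⊢
      obtain ⟨q, hq, hxq⟩ := hx
      rw [S.mem_grpBr χ] at hq
      obtain ⟨τ, hτ, j', hj', rfl⟩ := hq
      have hOK1 : S.LevelOK χ k (t+1) := ⟨hOK.1, hlt⟩
      refine ⟨S.hullP k ((Mconst χ)^t) (τ, j' / Mconst χ), ?_, ?_⟩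
      · rw [S.mem_grpBr χ]
        exact ⟨τ, hτ, j' / Mconst χ, HPS.jdiv_lt hχ hj', rfl⟩
      · exact S.nest_incl χ hχ hOK1 hτ hj' hxq
    · -- crossing to the next star level
      rw [heq, heq']
      intro x hx
      simp only [Set.mem_iUnion, Finset.mem_coe, exists_prop] at hx ⊢
      obtain ⟨q, hq, hxq⟩ := hx
      rw [S.mem_grpBr χ] at hq
      obtain ⟨τ', hτ', r, hr, rfl⟩ := hq
      have hr0 : r = 0 := by simpa using hr
      subst hr0
      rw [show k + 1 - 1 = k from rfl] at hτ'
      obtain ⟨hlτ', hvτ'⟩ := mem_wordsF.mp hτ'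
      have hk : 1 ≤ k := hOK.1
      obtain ⟨τ, j'', rfl⟩ : ∃ τ j'', τ' = τ ++ [j''] := by
        refine ⟨τ'.dropLast, τ'.getLast ?_, (List.dropLast_append_getLast _).symm⟩
        intro hh; rw [hh] at hlτ'; simp at hlτ'; omega
      obtain ⟨hvτ, hj''1, hj''2⟩ := valid_of_append hvτ'
      have hlτ : τ.length = k - 1 := by simp at hlτ'; omega
      have hτm : τ ∈ WordsF S.n (k-1) := mem_wordsF.mpr ⟨hlτ, hvτ⟩
      have hj''2' : j'' ≤ S.n k := by rwa [show τ.length + 1 = k from by omega] at hj''2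
      refine ⟨S.hullP k ((Mconst χ)^t) (τ, (j'' * (Mconst χ)^t - 1) / S.n k), ?_, ?_⟩
      · rw [S.mem_grpBr χ]
        exact ⟨τ, hτm, _, (grp_mem (HPS.G_pos hχ t) hj''1 hj''2').1, rfl⟩
      · exact (le_trans (S.star_incl χ hχ hτ') (S.parent_incl χ hχ hOK hτm hj''1 hj''2')) hxq
  have hmono : ∀ m m', m ≤ m' → (⋃ p ∈ S.BrF χ m', Set.Icc p.1 p.2) ⊆
      ⋃ p ∈ S.BrF χ m, Set.Icc p.1 p.2 := by
    intro m m' hmm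
    induction m' , hmm using Nat.le_induction with
    | base => exact le_rfl
    | succ m' hmm ih => exact le_trans (hd2 m') ih
  have hstar : ∀ k, (⋃ p ∈ S.BrF χ (S.mIdx χ k), Set.Icc p.1 p.2) = S.EkStar k := by
    intro k
    rw [S.brF_mIdx χ k, S.union_grpBr0 χ k]
  refine ⟨two_chi_lt_M, S.BrF χ, ?_, ?_, ?_, hd2, rfl, S.iInter_ekstar, ?_, ?_, ?_, ?_⟩
  · -- nonempty
    intro m
    obtain ⟨k, t, hOK, hm, heq⟩ := S.brF_shape χ m
    rw [heq]
    exact S.grpBr_nonempty χ hχ k t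
  · -- nondegenerate
    intro m p hp
    obtain ⟨k, t, hOK, hm, heq⟩ := S.brF_shape χ m
    rw [heq, S.mem_grpBr χ] at hp
    obtain ⟨σ, hσ, j, hj, rfl⟩ := hp
    exact S.hull_lt χ hχ hOK hσ hj
  · -- disjoint interiors
    intro m p hp q hq hne
    obtain ⟨k, t, hOK, hm, heq⟩ := S.brF_shape χ m
    rw [heq, S.mem_grpBr χ] at hp hq
    obtain ⟨σ, hσ, i, hi, rfl⟩ := hp
    obtain ⟨τ, hτ, j, hj, rfl⟩ := hq
    have hne' : (σ, i) ≠ (τ, j) := by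
      intro hh
      exact hne (by rw [hh])
    rcases S.hull_sep χ hχ hOK hσ hτ hi hj hne' with hh | hh <;>
      · rw [Set.eq_empty_iff_forall_notMem]
        rintro x ⟨⟨hx1, hx2⟩, ⟨hx3, hx4⟩⟩
        linarith
  · -- E = ⋂ H_m
    apply Set.Subset.antisymm
    · intro x hx
      rw [S.iInter_ekstar] at hx
      rw [Set.mem_iInter] at hx ⊢
      intro m
      apply hmono m (S.mIdx χ m) (S.self_le_mIdx χ m)
      rw [hstar m]
      exact hx m
    · intro x hx
      rw [S.iInter_ekstar, Set.mem_iInter]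
      rw [Set.mem_iInter] at hx
      intro k
      rw [← hstar k]
      exact hx (S.mIdx χ k)
  · -- H_{m_k} = E_k*
    intro k
    rw [S.brF_mIdx χ k, S.coe_grpBr0 χ k]
  · -- counting
    intro m p hp
    obtain ⟨k, t, hOK, hm, heq⟩ := S.brF_shape χ m
    rw [heq, S.mem_grpBr χ] at hp
    obtain ⟨σ, hσ, j, hj, rfl⟩ := hp
    rcases S.brF_succ_shape χ hOK hm with ⟨hlt, heq'⟩ | ⟨hlast, heq'⟩
    · rw [heq']
      exact S.count_T3 χ hχ ⟨hOK.1, hlt⟩ hσ hj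
    · rw [heq']
      exact S.count_T4 χ hχ hOK hlast hσ hj
  · -- comparability
    intro m p hp q hq
    obtain ⟨k, t, hOK, hm, heq⟩ := S.brF_shape χ m
    rw [heq, S.mem_grpBr χ] at hp hq
    obtain ⟨σ, hσ, i, hi, rfl⟩ := hp
    obtain ⟨τ, hτ, j, hj, rfl⟩ := hq
    exact S.hull_comp χ hχ hgap hOK hσ hτ hi hj
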